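/- Any chain code U with qturn(P) ∈ {0, 1} for every prefix P of U has an unfolding dual path whose x-coordinates are weakly monotonically nondecreasing within each horizontal run, and whose points are pairwise distinct. -/

import Mathlib

inductive TurnSym : Type
  | L | R | S
deriving DecidableEq

def qt : TurnSym → ℤ
  | TurnSym.L => -1
  | TurnSym.R => 1
  | TurnSym.S => 0

def qturn (U : List TurnSym) : ℤ := (U.map qt).sum

def rot : TurnSym → ℤ × ℤ → ℤ × ℤ
  | TurnSym.R, d => (d.2, -d.1)
  | TurnSym.L, d => (-d.2, d.1)
  | TurnSym.S, d => d

def pathStep (s : (ℤ × ℤ) × (ℤ × ℤ)) (a : TurnSym) : (ℤ × ℤ) × (ℤ × ℤ) :=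
  let d := rot a s.2
  (s.1 + d, d)

/-- Points p_0 = (0,0), p_1 = (0,1), ..., p_{n+1} of the unfolding dual path. -/
def pts (U : List TurnSym) : List (ℤ × ℤ) :=
  (0, 0) :: (List.scanl pathStep ((0, 1), (0, 1)) U).map Prod.fst

/-- 90° clockwise rotation. -/
def cw (d : ℤ × ℤ) : ℤ × ℤ := (d.2, -d.1)

/-- Final heading after processing a chain code from initial heading (0,1). -/
def headAfter (U : List TurnSym) : ℤ × ℤ := U.foldl (fun d a => rot a d) (0, 1)

/-- Reflection of a chain code: swap L and R. -/
def reflCode (U : List TurnSym) : List TurnSym :=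
  U.map fun a => match a with
    | TurnSym.L => TurnSym.R
    | TurnSym.R => TurnSym.L
    | TurnSym.S => TurnSym.S

/-- Action of a chain code on an arbitrary initial heading. -/
def act (U : List TurnSym) (d : ℤ × ℤ) : ℤ × ℤ := U.foldl (fun d a => rot a d) d

/-! Every prefix turns a net 0 or 1 quarter-turns clockwise, and the heading after a prefix is
the initial heading `(0, 1)` turned clockwise `qturn` times, so every step goes up or to the
right. Hence horizontal steps point in the `+x` direction, and `x + y` grows by exactly one per
step: it equals the index of the point, so no point repeats. -/

lemma cw_iterate_four : cw^[4] = id := by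
  funext d
  simp [cw]

lemma cw_iterate_mod_four (n : ℕ) : cw^[n % 4] = cw^[n] := by
  conv_rhs => rw [← Nat.mod_add_div n 4, Function.iterate_add, Function.iterate_mul,
    cw_iterate_four, Function.iterate_id, Function.comp_id]

lemma rot_eq_cw_iterate (a : TurnSym) : rot a = cw^[(qt a % 4).toNat] := by
  funext d
  cases a <;> simp [rot, qt, cw]

lemma act_eq_cw_iterate (U : List TurnSym) (d : ℤ × ℤ) :
    act U d = cw^[(qturn U % 4).toNat] d := by
  induction U generalizing d with
  | nil => simp [act, qturn]
  | cons a U ih =>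
    have hq : qturn (a :: U) = qt a + qturn U := by simp [qturn]
    rw [act, List.foldl_cons, ← act, ih, rot_eq_cw_iterate, ← Function.iterate_add_apply,
      ← cw_iterate_mod_four, hq]
    congr 2
    omega

lemma headAfter_eq_of_qturn_mem {U : List TurnSym} (hU : qturn U ∈ ({0, 1} : Set ℤ)) :
    headAfter U = (0, 1) ∨ headAfter U = (1, 0) := by
  change act U (0, 1) = _ ∨ act U (0, 1) = _
  simp only [Set.mem_insert_iff, Set.mem_singleton_iff] at hU
  rcases hU with hU | hU <;> simp [act_eq_cw_iterate, hU, cw]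

lemma foldl_pathStep_snd (U : List TurnSym) (s : (ℤ × ℤ) × (ℤ × ℤ)) :
    (U.foldl pathStep s).2 = act U s.2 := by
  induction U generalizing s with
  | nil => rfl
  | cons a U ih => exact ih _

lemma pts_length (U : List TurnSym) : (pts U).length = U.length + 2 := by
  simp [pts]

lemma pts_getElem_succ_sub (U : List TurnSym) (i : ℕ) (hi : i + 1 < (pts U).length) :
    (pts U)[i + 1] - (pts U)[i]'(Nat.lt_of_succ_lt hi) = headAfter (U.take i) := by
  rw [pts_length] at hi
  cases i with
  | zero => simp [pts, headAfter]
  | succ k =>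
    have hk : k < U.length := by omega
    simp only [pts, List.getElem_cons_succ, List.getElem_map, List.getElem_scanl,
      List.take_succ_eq_append_getElem hk, List.foldl_append, List.foldl_cons, List.foldl_nil]
    rw [pathStep, add_sub_cancel_left, foldl_pathStep_snd, headAfter, List.foldl_append]
    rfl

lemma pts_step_eq {U : List TurnSym} (h : ∀ P, P <+: U → qturn P ∈ ({0, 1} : Set ℤ))
    (i : ℕ) (hi : i + 1 < (pts U).length) :
    (pts U)[i + 1] - (pts U)[i]'(Nat.lt_of_succ_lt hi) = (0, 1) ∨
      (pts U)[i + 1] - (pts U)[i]'(Nat.lt_of_succ_lt hi) = (1, 0) := by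
  rw [pts_getElem_succ_sub]
  exact headAfter_eq_of_qturn_mem (h _ (List.take_prefix _ _))

lemma pts_fst_add_snd {U : List TurnSym} (h : ∀ P, P <+: U → qturn P ∈ ({0, 1} : Set ℤ))
    (i : ℕ) (hi : i < (pts U).length) :
    (pts U)[i].1 + (pts U)[i].2 = i := by
  induction i with
  | zero => rfl
  | succ i ih =>
    have := ih (by omega)
    push_cast
    rcases pts_step_eq h i hi with hstep | hstep <;>
    · have := congrArg (fun p : ℤ × ℤ => p.1 + p.2) hstep
      simp only [Prod.fst_sub, Prod.snd_sub] at this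
      linarith

theorem stmt13 (U : List TurnSym)
    (h : ∀ P, P <+: U → qturn P ∈ ({0, 1} : Set ℤ)) :
    (pts U).Nodup ∧
    ∀ i (hi : i + 1 < (pts U).length),
      ((pts U)[i + 1] - (pts U)[i]'(by omega)).2 = 0 →
      (pts U)[i + 1] - (pts U)[i]'(by omega) = (1, 0) := by
  constructor
  · rw [List.nodup_iff_injective_get]
    rintro ⟨i, hi⟩ ⟨j, hj⟩ hij
    have hi' := pts_fst_add_snd h i hi
    have hj' := pts_fst_add_snd h j hj
    simp only [List.get_eq_getElem] at hij
    rw [hij, hj'] at hi'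
    exact Fin.ext (by exact_mod_cast hi'.symm)
  · intro i hi hvert
    rcases pts_step_eq h i hi with hstep | hstep
    · simp [hstep] at hvert
    · exact hstep
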